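/- In the monoid G⁺_{m,n}, every element w lying in the set W_{m,n} of elements containing neither Δ₁ = s·t₁⋯t_m nor Δ₂ = s·u₁⋯u_n as a subword can be written uniquely in the normal form w = w₀(t)·w₀(u)·s·w₁(t)·w₁(u)·s⋯s·w_N(t)·w_N(u), where each w_i(t) is a positive word in t₁,…,t_m and each w_i(u) is a positive word in u₁,…,u_n. -/

import Mathlib

/-- Generators of the monoid G⁺_{m,n}: s, t₁,…,t_m, u₁,…,u_n. -/
inductive GGen (m n : ℕ) : Type
  | s : GGen m n
  | t : Fin m → GGen m n
  | u : Fin n → GGen m n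
deriving DecidableEq

/-- The word s·t₁⋯t_m. -/
def wordT (m n : ℕ) : FreeMonoid (GGen m n) :=
  FreeMonoid.ofList (GGen.s :: List.ofFn (fun i : Fin m => GGen.t i))

/-- The word s·u₁⋯u_n. -/
def wordU (m n : ℕ) : FreeMonoid (GGen m n) :=
  FreeMonoid.ofList (GGen.s :: List.ofFn (fun j : Fin n => GGen.u j))

/-- The defining relations: the cyclic relations [s,t₁,…,t_m] and [s,u₁,…,u_n]
(all cyclic rotations of the corresponding words are equal) and the commutation
relations t_i·u_j = u_j·t_i. -/
inductive GRel (m n : ℕ) : FreeMonoid (GGen m n) → FreeMonoid (GGen m n) → Prop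
  | cycT (j : ℕ) : GRel m n (wordT m n)
      (FreeMonoid.ofList ((FreeMonoid.toList (wordT m n)).rotate j))
  | cycU (j : ℕ) : GRel m n (wordU m n)
      (FreeMonoid.ofList ((FreeMonoid.toList (wordU m n)).rotate j))
  | comm (i : Fin m) (j : Fin n) :
      GRel m n (FreeMonoid.of (GGen.t i) * FreeMonoid.of (GGen.u j))
               (FreeMonoid.of (GGen.u j) * FreeMonoid.of (GGen.t i))

/-- The monoid G⁺_{m,n}. -/
abbrev GMonoid (m n : ℕ) : Type := (conGen (GRel m n)).Quotient

/-- The image of a generator in G⁺_{m,n}. -/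
def gmk {m n : ℕ} (x : GGen m n) : GMonoid m n :=
  (conGen (GRel m n)).mk' (FreeMonoid.of x)

/-- The element Δ = s·t₁⋯t_m·u₁⋯u_n. -/
def gDelta (m n : ℕ) : GMonoid m n :=
  (conGen (GRel m n)).mk' (FreeMonoid.ofList
    (GGen.s :: ((List.ofFn fun i : Fin m => GGen.t i) ++ List.ofFn fun j : Fin n => GGen.u j)))

/-- v is a factor (substring) of w. -/
def IsFactor {X : Type*} (v w : FreeMonoid X) : Prop :=
  ∃ p q : FreeMonoid X, w = p * v * q

/-- The set W_{m,n} of elements of G⁺_{m,n} containing neither Δ₁ = s·t₁⋯t_m nor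
Δ₂ = s·u₁⋯u_n as a subword (of any representing positive word). -/
def Wset (m n : ℕ) : Set (GMonoid m n) :=
  {w | ∀ rep : FreeMonoid (GGen m n), (conGen (GRel m n)).mk' rep = w →
    ¬ IsFactor (wordT m n) rep ∧ ¬ IsFactor (wordU m n) rep}

/-- The embedding of positive words in the t's into G⁺_{m,n}. -/
def embT {m n : ℕ} : FreeMonoid (Fin m) →* GMonoid m n :=
  FreeMonoid.lift fun i => gmk (GGen.t i)

/-- The embedding of positive words in the u's into G⁺_{m,n}. -/
def embU {m n : ℕ} : FreeMonoid (Fin n) →* GMonoid m n :=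
  FreeMonoid.lift fun j => gmk (GGen.u j)

/-- Evaluation of a normal form
w₀(t)·w₀(u)·s·w₁(t)·w₁(u)·s⋯s·w_N(t)·w_N(u), encoded as the list of blocks
(w_i(t), w_i(u)) separated by s. -/
def evalNF {m n : ℕ} : List (FreeMonoid (Fin m) × FreeMonoid (Fin n)) → GMonoid m n
  | [] => 1
  | [(x, y)] => embT x * embU y
  | (x, y) :: rest => embT x * embU y * gmk GGen.s * evalNF rest

/-! Split a word at its letters `s` into blocks and sort each block into its `t`-letters
followed by its `u`-letters (`normalForm`). This is invariant under the commutations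
`t_i u_j = u_j t_i`, and these are the only relations that can ever be applied to a word
representing an element of `W_{m,n}`: both sides of a cyclic relation are equal to `Δ₁` or
`Δ₂` in `G⁺_{m,n}`. So all representatives of `w ∈ W_{m,n}` have the same normal form, which
evaluates to `w`. Conversely, the word spelled out by any normal form of `w` represents `w`
and has that normal form, whence uniqueness. -/

theorem IsFactor.mul_right {X : Type*} {v w : FreeMonoid X} (h : IsFactor v w)
    (y : FreeMonoid X) : IsFactor v (w * y) := by
  obtain ⟨p, q, rfl⟩ := h
  exact ⟨p, q * y, by simp only [mul_assoc]⟩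

theorem IsFactor.mul_left {X : Type*} {v w : FreeMonoid X} (h : IsFactor v w)
    (y : FreeMonoid X) : IsFactor v (y * w) := by
  obtain ⟨p, q, rfl⟩ := h
  exact ⟨y * p, q, by simp only [mul_assoc]⟩

theorem IsFactor.refl {X : Type*} (v : FreeMonoid X) : IsFactor v v :=
  ⟨1, 1, by rw [one_mul, mul_one]⟩

section NormalForm

open FreeMonoid

variable {m n : ℕ}

inductive CommRel (m n : ℕ) : FreeMonoid (GGen m n) → FreeMonoid (GGen m n) → Prop
  | comm (i : Fin m) (j : Fin n) :
      CommRel m n (of (GGen.t i) * of (GGen.u j)) (of (GGen.u j) * of (GGen.t i))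

theorem conGen_commRel_le : conGen (CommRel m n) ≤ conGen (GRel m n) :=
  Con.conGen_mono fun _ _ ⟨i, j⟩ => GRel.comm i j

def AvoidsDeltas (a : FreeMonoid (GGen m n)) : Prop :=
  ∀ v, conGen (GRel m n) a v → ¬IsFactor (wordT m n) v ∧ ¬IsFactor (wordU m n) v

theorem AvoidsDeltas.of_rel {a b : FreeMonoid (GGen m n)} (ha : AvoidsDeltas a)
    (hab : conGen (GRel m n) a b) : AvoidsDeltas b :=
  fun v hv => ha v (ConGen.Rel.trans hab hv)

theorem AvoidsDeltas.of_mul_left {a b : FreeMonoid (GGen m n)} (hab : AvoidsDeltas (a * b)) :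
    AvoidsDeltas a := by
  intro v hv
  have h := hab (v * b) (ConGen.Rel.mul hv (ConGen.Rel.refl b))
  exact ⟨fun hT => h.1 (hT.mul_right b), fun hU => h.2 (hU.mul_right b)⟩

theorem AvoidsDeltas.of_mul_right {a b : FreeMonoid (GGen m n)} (hab : AvoidsDeltas (a * b)) :
    AvoidsDeltas b := by
  intro v hv
  have h := hab (a * v) (ConGen.Rel.mul (ConGen.Rel.refl a) hv)
  exact ⟨fun hT => h.1 (hT.mul_left a), fun hU => h.2 (hU.mul_left a)⟩

theorem AvoidsDeltas.commRel_of_rel {a b : FreeMonoid (GGen m n)} (ha : AvoidsDeltas a)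
    (hab : conGen (GRel m n) a b) : conGen (CommRel m n) a b := by
  induction hab with
  | of x y hxy =>
    cases hxy with
    | cycT j => exact absurd (IsFactor.refl _) (ha _ (ConGen.Rel.refl _)).1
    | cycU j => exact absurd (IsFactor.refl _) (ha _ (ConGen.Rel.refl _)).2
    | comm i j => exact ConGen.Rel.of _ _ (CommRel.comm i j)
  | refl x => exact ConGen.Rel.refl x
  | symm h ih => exact ConGen.Rel.symm (ih (ha.of_rel (ConGen.Rel.symm h)))
  | trans h₁ _ ih₁ ih₂ => exact ConGen.Rel.trans (ih₁ ha) (ih₂ (ha.of_rel h₁))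
  | mul _ _ ih₁ ih₂ => exact ConGen.Rel.mul (ih₁ ha.of_mul_left) (ih₂ ha.of_mul_right)

abbrev Blocks (m n : ℕ) := List (FreeMonoid (Fin m) × FreeMonoid (Fin n))

def parseStep : GGen m n → Blocks m n → Blocks m n
  | .s, l => (1, 1) :: l
  | .t i, l => l.modifyHead (Prod.map (of i * ·) id)
  | .u j, l => l.modifyHead (Prod.map id (of j * ·))

def parse (a : FreeMonoid (GGen m n)) (S : Blocks m n) : Blocks m n :=
  a.toList.foldr parseStep S

def normalForm (a : FreeMonoid (GGen m n)) : Blocks m n :=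
  parse a [(1, 1)]

@[simp]
theorem parse_one (S : Blocks m n) : parse 1 S = S := rfl

theorem parse_of (g : GGen m n) (S : Blocks m n) : parse (of g) S = parseStep g S := rfl

theorem parse_of_mul (g : GGen m n) (a : FreeMonoid (GGen m n)) (S : Blocks m n) :
    parse (of g * a) S = parseStep g (parse a S) := rfl

theorem parse_mul (a b : FreeMonoid (GGen m n)) (S : Blocks m n) :
    parse (a * b) S = parse a (parse b S) :=
  List.foldr_append

theorem parse_ne_nil (a : FreeMonoid (GGen m n)) {S : Blocks m n} (hS : S ≠ []) :
    parse a S ≠ [] := by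
  induction a using FreeMonoid.inductionOn' with
  | one => exact hS
  | of_mul g a ih =>
    rw [parse_of_mul]
    cases g <;> simp [parseStep, ih]

theorem normalForm_ne_nil (a : FreeMonoid (GGen m n)) : normalForm a ≠ [] :=
  parse_ne_nil a (List.cons_ne_nil _ _)

theorem parse_eq_of_commRel {a b : FreeMonoid (GGen m n)} (hab : conGen (CommRel m n) a b) :
    parse a = parse b := by
  induction hab with
  | of x y hxy =>
    obtain ⟨i, j⟩ := hxy
    funext S
    cases S <;> rfl
  | refl x => rfl
  | symm _ ih => exact ih.symm
  | trans _ _ ih₁ ih₂ => exact ih₁.trans ih₂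
  | mul _ _ ih₁ ih₂ =>
    funext S
    rw [parse_mul, parse_mul, ih₁, ih₂]

theorem parse_map_t (x x' : FreeMonoid (Fin m)) (y : FreeMonoid (Fin n)) (S : Blocks m n) :
    parse (map GGen.t x) ((x', y) :: S) = (x * x', y) :: S := by
  induction x using FreeMonoid.inductionOn' with
  | one => simp
  | of_mul i x ih => simp [parse_of_mul, ih, parseStep, mul_assoc]

theorem parse_map_u (y y' : FreeMonoid (Fin n)) (x : FreeMonoid (Fin m)) (S : Blocks m n) :
    parse (map GGen.u y) ((x, y') :: S) = (x, y * y') :: S := by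
  induction y using FreeMonoid.inductionOn' with
  | one => simp
  | of_mul j y ih => simp [parse_of_mul, ih, parseStep, mul_assoc]

def Blocks.word : Blocks m n → FreeMonoid (GGen m n)
  | [] => 1
  | [(x, y)] => map GGen.t x * map GGen.u y
  | (x, y) :: l => map GGen.t x * map GGen.u y * of GGen.s * Blocks.word l

theorem Blocks.word_cons_cons (x : FreeMonoid (Fin m)) (y : FreeMonoid (Fin n))
    (p : FreeMonoid (Fin m) × FreeMonoid (Fin n)) (l : Blocks m n) :
    Blocks.word ((x, y) :: p :: l) =
      map GGen.t x * map GGen.u y * of GGen.s * Blocks.word (p :: l) := rfl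

theorem Blocks.word_cons (x : FreeMonoid (Fin m)) (y : FreeMonoid (Fin n)) (l : Blocks m n) :
    Blocks.word ((x, y) :: l) = map GGen.t x * map GGen.u y * Blocks.word ((1, 1) :: l) := by
  cases l <;> simp [Blocks.word, mul_assoc]

theorem normalForm_word : ∀ {l : Blocks m n}, l ≠ [] → normalForm l.word = l
  | [(x, y)], _ => by
    rw [normalForm, Blocks.word, parse_mul, parse_map_u, parse_map_t, mul_one, mul_one]
  | (x, y) :: p :: l, _ => by
    rw [normalForm, Blocks.word_cons_cons, parse_mul, ← normalForm,
      normalForm_word (List.cons_ne_nil p l), parse_mul, parse_of, parseStep, parse_mul,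
      parse_map_u, parse_map_t, mul_one, mul_one]

theorem commRel_map_t_mul_of_u (x : FreeMonoid (Fin m)) (j : Fin n) :
    conGen (CommRel m n) (map GGen.t x * of (GGen.u j)) (of (GGen.u j) * map GGen.t x) := by
  induction x using FreeMonoid.inductionOn' with
  | one => simpa using (conGen (CommRel m n)).refl (of (GGen.u j))
  | of_mul i x ih =>
    rw [MonoidHom.map_mul, map_of]
    refine ConGen.Rel.trans (y := of (GGen.t i) * (of (GGen.u j) * map GGen.t x)) ?_ ?_
    · rw [mul_assoc]
      exact ConGen.Rel.mul (ConGen.Rel.refl _) ih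
    · rw [← mul_assoc, ← mul_assoc]
      exact ConGen.Rel.mul (ConGen.Rel.of _ _ (CommRel.comm i j)) (ConGen.Rel.refl _)

theorem commRel_word_parseStep (g : GGen m n) {S : Blocks m n} (hS : S ≠ []) :
    conGen (CommRel m n) (parseStep g S).word (of g * S.word) := by
  obtain ⟨⟨x, y⟩, l, rfl⟩ := List.exists_cons_of_ne_nil hS
  cases g with
  | s =>
    rw [parseStep, Blocks.word_cons_cons, map_one, map_one, one_mul, one_mul]
    exact ConGen.Rel.refl _
  | t i =>
    rw [parseStep, List.modifyHead_cons, Prod.map_apply, Blocks.word_cons, Blocks.word_cons x,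
      MonoidHom.map_mul, map_of, id, mul_assoc, mul_assoc, mul_assoc]
    exact ConGen.Rel.refl _
  | u j =>
    rw [parseStep, List.modifyHead_cons, Prod.map_apply, Blocks.word_cons, Blocks.word_cons x,
      MonoidHom.map_mul, map_of, id, ← mul_assoc, ← mul_assoc, ← mul_assoc]
    exact ConGen.Rel.mul (ConGen.Rel.mul (commRel_map_t_mul_of_u x j) (ConGen.Rel.refl _))
      (ConGen.Rel.refl _)

theorem commRel_word_parse (a : FreeMonoid (GGen m n)) {S : Blocks m n} (hS : S ≠ []) :
    conGen (CommRel m n) (parse a S).word (a * S.word) := by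
  induction a using FreeMonoid.inductionOn' with
  | one => simpa using (conGen (CommRel m n)).refl S.word
  | of_mul g a ih =>
    rw [parse_of_mul, mul_assoc]
    exact ConGen.Rel.trans (commRel_word_parseStep g (parse_ne_nil a hS))
      (ConGen.Rel.mul (ConGen.Rel.refl _) ih)

theorem commRel_word_normalForm (a : FreeMonoid (GGen m n)) :
    conGen (CommRel m n) (normalForm a).word a := by
  simpa [normalForm, Blocks.word] using commRel_word_parse a (List.cons_ne_nil (1, 1) [])

theorem mk_map_t (x : FreeMonoid (Fin m)) :
    (conGen (GRel m n)).mk' (map GGen.t x) = embT x :=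
  DFunLike.congr_fun (FreeMonoid.hom_eq (f := (conGen (GRel m n)).mk'.comp (map GGen.t))
    (g := embT) fun _ => rfl) x

theorem mk_map_u (y : FreeMonoid (Fin n)) :
    (conGen (GRel m n)).mk' (map GGen.u y) = embU y :=
  DFunLike.congr_fun (FreeMonoid.hom_eq (f := (conGen (GRel m n)).mk'.comp (map GGen.u))
    (g := embU) fun _ => rfl) y

theorem evalNF_eq_mk_word : ∀ l : Blocks m n, evalNF l = (conGen (GRel m n)).mk' l.word
  | [] => (map_one _).symm
  | [(x, y)] => by
    rw [evalNF, Blocks.word, map_mul, mk_map_t, mk_map_u]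
  | (x, y) :: p :: l => by
    show embT x * embU y * gmk GGen.s * evalNF (p :: l) = _
    rw [Blocks.word_cons_cons, map_mul, map_mul, map_mul, mk_map_t, mk_map_u,
      evalNF_eq_mk_word (p :: l)]
    rfl

end NormalForm

theorem stmt_19_general (m n : ℕ) (w : GMonoid m n)
    (hw : w ∈ Wset m n) :
    ∃! l : List (FreeMonoid (Fin m) × FreeMonoid (Fin n)), l ≠ [] ∧ evalNF l = w := by
  obtain ⟨a, rfl⟩ := Con.mk'_surjective w
  have ha : AvoidsDeltas a := fun v hv => hw v ((Con.eq _).2 hv.symm)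
  refine ⟨normalForm a, ⟨normalForm_ne_nil a, ?_⟩, ?_⟩
  · rw [evalNF_eq_mk_word]
    exact (Con.eq _).2 (conGen_commRel_le (commRel_word_normalForm a))
  · rintro l ⟨hl, hla⟩
    have hal : conGen (GRel m n) a (Blocks.word l) :=
      (Con.eq _).1 ((evalNF_eq_mk_word l).symm.trans hla).symm
    rw [← normalForm_word hl, normalForm, normalForm, parse_eq_of_commRel (ha.commRel_of_rel hal)]

/-- Every element of W_{m,n} has a unique normal form
w₀(t)·w₀(u)·s·w₁(t)·w₁(u)·s⋯s·w_N(t)·w_N(u) with each w_i(t) a positive word in the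
t's and each w_i(u) a positive word in the u's. -/
theorem stmt_19 (m n : ℕ) (hm : 2 ≤ m) (hn : 2 ≤ n) (w : GMonoid m n)
    (hw : w ∈ Wset m n) :
    ∃! l : List (FreeMonoid (Fin m) × FreeMonoid (Fin n)), l ≠ [] ∧ evalNF l = w :=
  stmt_19_general m n w hw
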